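/- Let p ≠ q be points in the plane, let x be a point on the line through p and q lying outside the closed segment [p, q], let H⁻ be one of the two open halfplanes bounded by line pq, and let z ∈ H⁻. Then there exists δ > 0 such that for every r ∈ H⁻ with ‖r − x‖ < δ, the point z lies in the open interior of the circumdisc of p, q, r. -/

import Mathlib

/-
Circles through `p` and `q` are centred on the perpendicular bisector of `pq`, at
`c u = m + u • (q - p)^⊥` with `m` the midpoint, and
`‖w - c u‖² - ‖p - c u‖² = ⟪w - p, w - q⟫ - 2 u · orient p q w`.
The circumcircle of `p, q, r` is the one with `u = ⟪r - p, r - q⟫ / (2 orient p q r)`, and `z`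
lies inside it iff `⟪z - p, z - q⟫ < ⟪r - p, r - q⟫ / orient p q r · orient p q z`.
Since `x` is on the line `pq` outside `[p, q]`, `⟪x - p, x - q⟫ > 0`; as `r → x` inside `H⁻`,
`orient p q r → 0⁻` while `orient p q z < 0`, so the right-hand side tends to `+∞`.
-/

noncomputable section

/-- Points of the Euclidean plane. -/
abbrev Pt := EuclideanSpace ℝ (Fin 2)

/-- The orientation (cross product) determinant of the triple `(p, q, r)`. -/
def orient (p q r : Pt) : ℝ :=
  (q 0 - p 0) * (r 1 - p 1) - (q 1 - p 1) * (r 0 - p 0)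

open Filter Topology

theorem inner_lt_norm_mul_norm_of_notMem_segment {F : Type*} [NormedAddCommGroup F]
    [InnerProductSpace ℝ F] {p q x : F} (hx : x ∉ segment ℝ p q) :
    inner ℝ (x - p) (q - x) < ‖x - p‖ * ‖q - x‖ := by
  refine (real_inner_le_norm _ _).lt_of_ne fun h => hx ?_
  rw [mem_segment_iff_sameRay, sameRay_iff_norm_smul_eq, eq_comm, ← inner_eq_norm_mul_iff_real]
  exact h

theorem inner_sq_add_orient_sq (p q x : Pt) :
    inner ℝ (x - p) (q - x) ^ 2 + orient p q x ^ 2 = ‖x - p‖ ^ 2 * ‖q - x‖ ^ 2 := by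
  simp only [EuclideanSpace.norm_sq_eq, PiLp.inner_apply, Fin.sum_univ_two, orient,
    PiLp.sub_apply, Real.norm_eq_abs, sq_abs, RCLike.inner_apply, conj_trivial]
  ring

/- On the line, Cauchy–Schwarz holds with equality up to sign; off the segment the sign is `-`. -/
theorem inner_sub_sub_pos_of_orient_eq_zero {p q x : Pt} (hline : orient p q x = 0)
    (hseg : x ∉ segment ℝ p q) : 0 < inner ℝ (x - p) (x - q) := by
  have hlt := inner_lt_norm_mul_norm_of_notMem_segment hseg
  have hsq := inner_sq_add_orient_sq p q x
  have hp : 0 < ‖x - p‖ :=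
    norm_pos_iff.2 <| sub_ne_zero.2 fun h => hseg (h ▸ left_mem_segment ℝ x q)
  have hq : 0 < ‖q - x‖ :=
    norm_pos_iff.2 <| sub_ne_zero.2 fun h => hseg (h ▸ right_mem_segment ℝ p q)
  rw [hline] at hsq
  rw [← neg_sub q x, inner_neg_right]
  nlinarith [mul_pos hp hq]

theorem tendsto_div_nhdsWithin_neg_atBot {X : Type*} [TopologicalSpace X] {f g : X → ℝ} {x : X}
    (hf : ContinuousAt f x) (hg : ContinuousAt g x) (hfx : 0 < f x) (hgx : g x = 0) :
    Tendsto (fun y => f y / g y) (𝓝[{y | g y < 0}] x) atBot := by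
  have hg' : Tendsto g (𝓝[{y | g y < 0}] x) (𝓝[<] 0) :=
    tendsto_nhdsWithin_iff.2 ⟨hgx ▸ hg.tendsto.mono_left nhdsWithin_le_nhds,
      eventually_nhdsWithin_of_forall fun _ hy => hy⟩
  simpa only [div_eq_mul_inv, Function.comp_def] using
    (hf.tendsto.mono_left nhdsWithin_le_nhds).pos_mul_atBot hfx (tendsto_inv_nhdsLT_zero.comp hg')

theorem continuous_orient (p q : Pt) : Continuous (orient p q) := by
  unfold orient; fun_prop

def bisectorPoint (p q : Pt) (u : ℝ) : Pt :=
  !₂[(p 0 + q 0) / 2 - u * (q 1 - p 1), (p 1 + q 1) / 2 + u * (q 0 - p 0)]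

theorem dist_bisectorPoint_sq (p q w : Pt) (u : ℝ) :
    dist w (bisectorPoint p q u) ^ 2 =
      dist p (bisectorPoint p q u) ^ 2 + (inner ℝ (w - p) (w - q) - 2 * u * orient p q w) := by
  simp only [EuclideanSpace.dist_eq, Fin.sum_univ_two, Real.dist_eq, sq_abs, PiLp.inner_apply,
    RCLike.inner_apply, conj_trivial, PiLp.sub_apply, orient, bisectorPoint]
  rw [Real.sq_sqrt (by positivity), Real.sq_sqrt (by positivity)]
  simp only [Matrix.cons_val_zero, Matrix.cons_val_one, Matrix.cons_val_fin_one]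
  ring

theorem orient_self_right (p q : Pt) : orient p q q = 0 := by
  unfold orient; ring

theorem dist_bisectorPoint_eq_iff (p q w : Pt) (u : ℝ) :
    dist w (bisectorPoint p q u) = dist p (bisectorPoint p q u) ↔
      inner ℝ (w - p) (w - q) = 2 * u * orient p q w := by
  rw [← sq_eq_sq₀ dist_nonneg dist_nonneg, dist_bisectorPoint_sq, add_eq_left, sub_eq_zero]

theorem dist_bisectorPoint_lt_iff (p q w : Pt) (u : ℝ) :
    dist w (bisectorPoint p q u) < dist p (bisectorPoint p q u) ↔
      inner ℝ (w - p) (w - q) < 2 * u * orient p q w := by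
  rw [← pow_lt_pow_iff_left₀ dist_nonneg dist_nonneg two_ne_zero, dist_bisectorPoint_sq,
    add_lt_iff_neg_left, sub_neg]

theorem stmt12_general (p q x z : Pt)
    (hxline : orient p q x = 0) (hxseg : x ∉ segment ℝ p q)
    (hz : orient p q z < 0) :
    ∃ δ > 0, ∀ r : Pt, orient p q r < 0 → dist r x < δ →
      ∃ c : Pt, ∃ ρ : ℝ,
        dist p c = ρ ∧ dist q c = ρ ∧ dist r c = ρ ∧ dist z c < ρ := by
  set P : Pt → ℝ := fun w => inner ℝ (w - p) (w - q)
  have hP : Continuous P := by fun_prop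
  have hlim : Tendsto (fun r => P r / orient p q r * orient p q z)
      (𝓝[{r | orient p q r < 0}] x) atTop :=
    (tendsto_div_nhdsWithin_neg_atBot hP.continuousAt (continuous_orient p q).continuousAt
      (inner_sub_sub_pos_of_orient_eq_zero hxline hxseg) hxline).atBot_mul_const_of_neg hz
  obtain ⟨δ, hδ, hnear⟩ := Metric.eventually_nhds_iff.1 <|
    eventually_nhdsWithin_iff.1 (hlim.eventually_gt_atTop (P z))
  refine ⟨δ, hδ, fun r hr hrx => ?_⟩
  have hr0 : orient p q r ≠ 0 := hr.ne
  refine ⟨bisectorPoint p q (P r / (2 * orient p q r)), _, rfl, ?_, ?_, ?_⟩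
  · rw [dist_bisectorPoint_eq_iff, sub_self, inner_zero_right, orient_self_right, mul_zero]
  · rw [dist_bisectorPoint_eq_iff]
    show P r = _
    field_simp
  · rw [dist_bisectorPoint_lt_iff]
    refine (hnear hrx hr).trans_eq ?_
    rw [← mul_div_assoc, mul_div_mul_left _ _ two_ne_zero]

/-- Let `x` be a point of the line through `p` and `q` lying outside the closed segment
`[p, q]`, and let `z` lie in the open halfplane `H⁻ = {orient p q · < 0}`.  Then for
every point `r` of the same open halfplane `H⁻` close enough to `x`, the point `z` lies
in the open interior of the circumdisc of `p, q, r`. -/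
theorem stmt12 (p q x z : Pt) (hpq : p ≠ q)
    (hxline : orient p q x = 0) (hxseg : x ∉ segment ℝ p q)
    (hz : orient p q z < 0) :
    ∃ δ > 0, ∀ r : Pt, orient p q r < 0 → dist r x < δ →
      ∃ c : Pt, ∃ ρ : ℝ,
        dist p c = ρ ∧ dist q c = ρ ∧ dist r c = ρ ∧ dist z c < ρ :=
  stmt12_general p q x z hxline hxseg hz
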